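/- For any integrable f on 𝕋¹ and any test function ψ, the alignment collision operator Q_{AL}(f,f)(φ) = ∫_{𝕋¹}(2 b(2φ-φ*,φ*) 𝟙_{|φ-φ*|<π/4} f(2φ-φ*) f(φ*) - b(φ,φ*) 𝟙_{|φ-φ*|<π/2} f(φ) f(φ*)) dφ* satisfies the weak formulation ∫_{𝕋¹} Q_{AL}(f,f) ψ dφ = ∫_{𝕋¹} ∫_{|φ*-φ|<π/2} b(φ,φ*) f(φ) f(φ*) (ψ((φ+φ*)/2) - (ψ(φ)+ψ(φ*))/2) dφ* dφ, for a symmetric collision cross-section b. -/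

import Mathlib

open MeasureTheory Set

/-- The alignment collision operator
`Q_AL(f,f)(φ) = 2∫_{|φ-φ*|<π/4} b(2φ-φ*,φ*) f(2φ-φ*) f(φ*) dφ* - ∫_{|φ-φ*|<π/2} b(φ,φ*) f(φ) f(φ*) dφ*`. -/
noncomputable def QAL (b : ℝ → ℝ → ℝ) (f : ℝ → ℝ) (φ : ℝ) : ℝ :=
  2 * (∫ ψ in Ioo (φ - Real.pi/4) (φ + Real.pi/4), b (2*φ - ψ) ψ * f (2*φ - ψ) * f ψ)
  - ∫ ψ in Ioo (φ - Real.pi/2) (φ + Real.pi/2), b φ ψ * f φ * f ψ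

/-!
Write `P(x, y) = b(x, y) f(x) f(y)`, let `g` be the test function and parametrize the collision
partner as `y = x + u`, `|u| < π/2`; the gain term then becomes `∫ P(x - u/2, x + u/2) g(x) du`.
Integrated over the torus, the shear `x ↦ x + u/2` turns it into `∬ P(x, x + u) g(x + u/2)`, the
midpoint term. For the loss term, the shear `x ↦ x - u`, the symmetry of `P` and the reflection
`u ↦ -u` give `∬ P(x, x + u) g(x + u) = ∬ P(x, x + u) g(x)`, so the loss may be replaced by its
symmetrization `∬ P(x, x + u) (g(x) + g(x + u)) / 2`. A shear preserves the integral because,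
after exchanging the order of integration, it is a translation of a periodic function of `x`.
-/

open Function intervalIntegral

section IteratedIntervalIntegral

variable {E : Type*} [NormedAddCommGroup E] [NormedSpace ℝ E]

theorem integral_Ioo_sub_add_eq_intervalIntegral (g : ℝ → E) (x : ℝ) {r : ℝ} (hr : 0 ≤ r) :
    ∫ y in Ioo (x - r) (x + r), g y = ∫ u in -r..r, g (x + u) := by
  rw [intervalIntegral.integral_comp_add_left, ← integral_Ioc_eq_integral_Ioo,
    intervalIntegral.integral_of_le (by linarith), ← sub_eq_add_neg]

theorem Function.Periodic.intervalIntegral_comp_add_right {g : ℝ → E} {T : ℝ}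
    (hg : Periodic g T) (d : ℝ) : ∫ x in 0..T, g (x + d) = ∫ x in 0..T, g x := by
  rw [intervalIntegral.integral_comp_add_right, zero_add, add_comm T d]
  simpa using hg.intervalIntegral_add_eq d 0

theorem intervalIntegral_intervalIntegral_swap_of_continuous {F : ℝ → ℝ → E}
    (hF : Continuous (uncurry F)) (a b c d : ℝ) :
    ∫ x in a..b, ∫ y in c..d, F x y = ∫ y in c..d, ∫ x in a..b, F x y :=
  intervalIntegral_intervalIntegral_swap <|
    (hF.continuousOn.integrableOn_compact (isCompact_uIcc.prod isCompact_uIcc)).mono_set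
      (prod_mono uIoc_subset_uIcc uIoc_subset_uIcc)

theorem intervalIntegral_intervalIntegral_sub_of_continuous {F G : ℝ → ℝ → E}
    (hF : Continuous (uncurry F)) (hG : Continuous (uncurry G)) (a b c d : ℝ) :
    ∫ x in a..b, ∫ y in c..d, (F x y - G x y)
      = (∫ x in a..b, ∫ y in c..d, F x y) - ∫ x in a..b, ∫ y in c..d, G x y := by
  simp_rw [intervalIntegral.integral_sub ((hF.uncurry_left _).intervalIntegrable c d)
    ((hG.uncurry_left _).intervalIntegrable c d)]
  exact intervalIntegral.integral_sub
    ((continuous_parametric_intervalIntegral_of_continuous' hF c d).intervalIntegrable a b)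
    ((continuous_parametric_intervalIntegral_of_continuous' hG c d).intervalIntegrable a b)

theorem intervalIntegral_intervalIntegral_comp_add_mul_of_periodic {G : ℝ → ℝ → E} {T : ℝ}
    (hG : Continuous (uncurry G)) (hG_per : ∀ y, Periodic (G · y) T) (c r s : ℝ) :
    ∫ x in 0..T, ∫ y in r..s, G (x + c * y) y = ∫ x in 0..T, ∫ y in r..s, G x y := by
  have hshear : Continuous (uncurry fun x y => G (x + c * y) y) :=
    hG.comp (f := fun p : ℝ × ℝ => (p.1 + c * p.2, p.2)) (by fun_prop)
  rw [intervalIntegral_intervalIntegral_swap_of_continuous hshear,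
    intervalIntegral_intervalIntegral_swap_of_continuous hG]
  exact integral_congr fun y _ => (hG_per y).intervalIntegral_comp_add_right _

end IteratedIntervalIntegral

theorem intervalIntegral_weak_form_of_symm_of_periodic {P : ℝ → ℝ → ℝ} {g : ℝ → ℝ}
    {T : ℝ} (hP : Continuous (uncurry P)) (hP_symm : ∀ x y, P x y = P y x)
    (hP_per : ∀ x y, P (x + T) (y + T) = P x y) (hg : Continuous g) (hg_per : Periodic g T)
    (a : ℝ) :
    ∫ x in 0..T, (∫ u in -a..a, (P (x - u / 2) (x + u / 2) - P x (x + u))) * g x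
      = ∫ x in 0..T, ∫ u in -a..a,
          P x (x + u) * (g ((x + (x + u)) / 2) - (g x + g (x + u)) / 2) := by
  have hgain : ∫ x in 0..T, ∫ u in -a..a, P (x - u / 2) (x + u / 2) * g x
      = ∫ x in 0..T, ∫ u in -a..a, P x (x + u) * g (x + u / 2) := by
    rw [← intervalIntegral_intervalIntegral_comp_add_mul_of_periodic
      (G := fun x u => P (x - u / 2) (x + u / 2) * g x) (by fun_prop) ?_ (1 / 2)]
    · refine integral_congr fun x _ => integral_congr fun u _ => ?_
      ring_nf
    · intro u x
      simp only [show x + T - u / 2 = x - u / 2 + T by ring,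
        show x + T + u / 2 = x + u / 2 + T by ring, hP_per, hg_per x]
  have hloss : ∫ x in 0..T, ∫ u in -a..a, P x (x + u) * g (x + u)
      = ∫ x in 0..T, ∫ u in -a..a, P x (x + u) * g x := by
    rw [← intervalIntegral_intervalIntegral_comp_add_mul_of_periodic
      (G := fun x u => P x (x + u) * g (x + u)) (by fun_prop) ?_ (-1)]
    · refine integral_congr fun x _ => ?_
      conv_rhs => rw [← neg_neg a, ← intervalIntegral.integral_comp_neg, neg_neg]
      refine integral_congr fun u _ => ?_
      rw [hP_symm]
      ring_nf
    · intro u x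
      simp only [show x + T + u = x + u + T by ring, hP_per, hg_per _]
  calc ∫ x in 0..T, (∫ u in -a..a, (P (x - u / 2) (x + u / 2) - P x (x + u))) * g x
      = ∫ x in 0..T, ∫ u in -a..a, (P (x - u / 2) (x + u / 2) * g x - P x (x + u) * g x) := by
        simp_rw [← intervalIntegral.integral_mul_const, sub_mul]
    _ = (∫ x in 0..T, ∫ u in -a..a, P (x - u / 2) (x + u / 2) * g x)
          - ∫ x in 0..T, ∫ u in -a..a, P x (x + u) * g x :=
        intervalIntegral_intervalIntegral_sub_of_continuous (by fun_prop) (by fun_prop) _ _ _ _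
    _ = ((∫ x in 0..T, ∫ u in -a..a, P x (x + u) * g (x + u / 2))
          - ∫ x in 0..T, ∫ u in -a..a, P x (x + u) * g x)
          - ((∫ x in 0..T, ∫ u in -a..a, P x (x + u) * g (x + u))
            - ∫ x in 0..T, ∫ u in -a..a, P x (x + u) * g x) / 2 := by
        rw [hgain, hloss]; ring
    _ = ∫ x in 0..T, ∫ u in -a..a, ((P x (x + u) * g (x + u / 2) - P x (x + u) * g x)
          - (P x (x + u) * g (x + u) - P x (x + u) * g x) / 2) := by
        rw [intervalIntegral_intervalIntegral_sub_of_continuous ?_ ?_,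
          intervalIntegral_intervalIntegral_sub_of_continuous ?_ ?_]
        · simp_rw [intervalIntegral.integral_div]
          rw [intervalIntegral_intervalIntegral_sub_of_continuous ?_ ?_] <;> fun_prop
        all_goals fun_prop
    _ = _ := by
        refine integral_congr fun x _ => integral_congr fun u _ => ?_
        ring_nf

open Real

theorem QAL_eq_intervalIntegral {b : ℝ → ℝ → ℝ} {f : ℝ → ℝ} (hb : Continuous (uncurry b))
    (hf : Continuous f) (φ : ℝ) :
    QAL b f φ = ∫ u in -(π / 2)..π / 2,
      (b (φ - u / 2) (φ + u / 2) * f (φ - u / 2) * f (φ + u / 2)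
        - b φ (φ + u) * f φ * f (φ + u)) := by
  have hgain : 2 * ∫ ψ in Ioo (φ - π / 4) (φ + π / 4), b (2 * φ - ψ) ψ * f (2 * φ - ψ) * f ψ
      = ∫ u in -(π / 2)..π / 2,
          b (φ - u / 2) (φ + u / 2) * f (φ - u / 2) * f (φ + u / 2) := by
    rw [integral_Ioo_sub_add_eq_intervalIntegral _ _ (by positivity : (0 : ℝ) ≤ π / 4),
      intervalIntegral.integral_comp_div (fun v => b (φ - v) (φ + v) * f (φ - v) * f (φ + v))
        two_ne_zero, smul_eq_mul, show -(π / 2) / 2 = -(π / 4) by ring,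
        show π / 2 / 2 = π / 4 by ring]
    congr 1
    refine integral_congr fun v _ => ?_
    ring_nf
  rw [QAL, hgain, integral_Ioo_sub_add_eq_intervalIntegral _ _ pi_div_two_pos.le,
    intervalIntegral.integral_sub] <;>
  exact Continuous.intervalIntegrable (by fun_prop) _ _

theorem stmt_14 (b : ℝ → ℝ → ℝ) (f tf : ℝ → ℝ)
    (hb_cont : Continuous (Function.uncurry b))
    (hb_sym : ∀ x y, b x y = b y x)
    (hb_per1 : ∀ x y, b (x + 2*Real.pi) y = b x y)
    (hb_per2 : ∀ x y, b x (y + 2*Real.pi) = b x y)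
    (hf_cont : Continuous f) (hf_per : Function.Periodic f (2*Real.pi))
    (htf_cont : Continuous tf) (htf_per : Function.Periodic tf (2*Real.pi)) :
    (∫ φ in Ioc 0 (2*Real.pi), QAL b f φ * tf φ)
      = ∫ φ in Ioc 0 (2*Real.pi), ∫ ψ in Ioo (φ - Real.pi/2) (φ + Real.pi/2),
          b φ ψ * f φ * f ψ * (tf ((φ + ψ)/2) - (tf φ + tf ψ)/2) := by
  have h2π : (0 : ℝ) ≤ 2 * π := by positivity
  rw [← intervalIntegral.integral_of_le h2π, ← intervalIntegral.integral_of_le h2π]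
  simp_rw [QAL_eq_intervalIntegral hb_cont hf_cont,
    integral_Ioo_sub_add_eq_intervalIntegral _ _ pi_div_two_pos.le]
  exact intervalIntegral_weak_form_of_symm_of_periodic
    (P := fun x y => b x y * f x * f y) (by fun_prop) (fun x y => by rw [hb_sym]; ring)
    (fun x y => by simp only [hb_per1, hb_per2, hf_per x, hf_per y]) htf_cont htf_per (π / 2)
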